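/- arXiv:2101.12103 — 3 statements merged into one kernel-verified Lean document; each statement's English description precedes it below -/
import Mathlib

section
/- For every integer d ≥ 1, all m, l ∈ ℤ^d and every x ∈ ℝ^d, one has B(s_m + s_l)(x) + B(c_m − c_l)(x) − B(s_m)(x) − B(s_l)(x) − B(c_m)(x) − B(c_l)(x) = 2⟨m,l⟩·cos⟨x, m+l⟩, where ⟨m,l⟩ = Σ_{j=1}^d m_j l_j. In particular, if ⟨m,l⟩ ≠ 0 then cos⟨·, m+l⟩ is a scalar multiple of this combination of values of B on elements of the span of {s_m, s_l, c_m, c_l}. -/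
open Real MeasureTheory

/-- ⟨x, m⟩ = ∑ x_j m_j for x ∈ ℝ^d, m ∈ ℤ^d. -/
noncomputable def ip (d : ℕ) (x : Fin d → ℝ) (m : Fin d → ℤ) : ℝ :=
  ∑ j, x j * (m j : ℝ)

/-- Integer inner product on ℤ^d. -/
def ipZ (d : ℕ) (m l : Fin d → ℤ) : ℤ := ∑ j, m j * l j

/-- c_m(x) = cos⟨x,m⟩. -/
noncomputable def cmap (d : ℕ) (m : Fin d → ℤ) : (Fin d → ℝ) → ℝ :=
  fun x => Real.cos (ip d x m)

/-- s_m(x) = sin⟨x,m⟩. -/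
noncomputable def smap (d : ℕ) (m : Fin d → ℤ) : (Fin d → ℝ) → ℝ :=
  fun x => Real.sin (ip d x m)

/-- B(φ)(x) = ∑_j (∂_{x_j} φ(x))². -/
noncomputable def Bop (d : ℕ) (φ : (Fin d → ℝ) → ℝ) : (Fin d → ℝ) → ℝ :=
  fun x => ∑ j, (fderiv ℝ φ x (Pi.single j 1)) ^ 2

/-- Functions representable as θ₀ − ∑_{j=1}^n B(θ_j) with θ's in H, n ≥ 1. -/
noncomputable def BRep (d : ℕ) (H : Set ((Fin d → ℝ) → ℝ)) : Set ((Fin d → ℝ) → ℝ) :=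
  { f | ∃ n : ℕ, 1 ≤ n ∧ ∃ θ₀ ∈ H, ∃ θ : Fin n → (Fin d → ℝ) → ℝ,
      (∀ j, θ j ∈ H) ∧ f = θ₀ - ∑ j, Bop d (θ j) }

/-- F(H): f such that both f and −f are representable. -/
noncomputable def Fop (d : ℕ) (H : Set ((Fin d → ℝ) → ℝ)) : Set ((Fin d → ℝ) → ℝ) :=
  { f | f ∈ BRep d H ∧ -f ∈ BRep d H }

/-- H(I): span of {1} ∪ {c_k, s_k : k ∈ I}. -/
noncomputable def H0 (d : ℕ) (I : Finset (Fin d → ℤ)) : Set ((Fin d → ℝ) → ℝ) :=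
  ↑(Submodule.span ℝ
      ({fun _ => (1:ℝ)} ∪ ⋃ k ∈ (I : Set (Fin d → ℤ)), {cmap d k, smap d k}))

noncomputable def HSeq (d : ℕ) (I : Finset (Fin d → ℤ)) : ℕ → Set ((Fin d → ℝ) → ℝ)
  | 0 => H0 d I
  | j + 1 => Fop d (HSeq d I j)

/-- H_∞(I) = ⋃_j H_j(I). -/
noncomputable def Hinf (d : ℕ) (I : Finset (Fin d → ℤ)) : Set ((Fin d → ℝ) → ℝ) :=
  ⋃ j, HSeq d I j

/-- I generates ℤ^d over ℤ. -/
def IsGenerator (d : ℕ) (I : Finset (Fin d → ℤ)) : Prop :=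
  ∀ n : Fin d → ℤ, ∃ a : (Fin d → ℤ) → ℤ, n = ∑ k ∈ I, a k • k

/-- Connectedness condition of Proposition 2.5. -/
def ConnectedSet (d : ℕ) (I : Finset (Fin d → ℤ)) : Prop :=
  ∀ l ∈ I, ∀ m ∈ I, ∃ k : ℕ, ∃ n : Fin (k + 1) → (Fin d → ℤ),
    (∀ j, n j ∈ I) ∧ ipZ d l (n 0) ≠ 0 ∧
    (∀ j : Fin k, ipZ d (n j.castSucc) (n j.succ) ≠ 0) ∧
    ipZ d (n (Fin.last k)) m ≠ 0

/-- (2πℤ^d)-periodicity for real-valued functions. -/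
def Periodic2pi (d : ℕ) (f : (Fin d → ℝ) → ℝ) : Prop :=
  ∀ (x : Fin d → ℝ) (k : Fin d → ℤ), f (x + fun j => 2 * Real.pi * (k j : ℝ)) = f x

noncomputable def ipL (d : ℕ) (m : Fin d → ℤ) : (Fin d → ℝ) →L[ℝ] ℝ :=
  ∑ j, (m j : ℝ) • ContinuousLinearMap.proj j

lemma ipL_apply (d : ℕ) (m : Fin d → ℤ) (y : Fin d → ℝ) :
    ipL d m y = ip d y m := by
  simp [ipL, ip, mul_comm]

lemma hasFDerivAt_ip (d : ℕ) (m : Fin d → ℤ) (x : Fin d → ℝ) :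
    HasFDerivAt (fun y => ip d y m) (ipL d m) x := by
  have : (fun y => ip d y m) = fun y => ipL d m y := by
    funext y; rw [ipL_apply]
  rw [this]
  exact (ipL d m).hasFDerivAt

lemma ipL_single (d : ℕ) (m : Fin d → ℤ) (j : Fin d) :
    ipL d m (Pi.single j 1) = (m j : ℝ) := by
  rw [ipL_apply]; simp [ip, Pi.single_apply]

/-- B(s_m+s_l) + B(c_m−c_l) − B(s_m) − B(s_l) − B(c_m) − B(c_l)
= 2⟨m,l⟩ cos⟨·, m+l⟩; hence for ⟨m,l⟩ ≠ 0, cos⟨·,m+l⟩ is a scalar multiple of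
this combination. -/
theorem stmt2 (d : ℕ) (hd : 1 ≤ d) (m l : Fin d → ℤ) :
    (∀ x : Fin d → ℝ,
      Bop d (smap d m + smap d l) x + Bop d (cmap d m - cmap d l) x
        - Bop d (smap d m) x - Bop d (smap d l) x - Bop d (cmap d m) x
        - Bop d (cmap d l) x
        = 2 * (ipZ d m l : ℝ) * Real.cos (ip d x (m + l))) ∧
    ((ipZ d m l : ℤ) ≠ 0 → ∃ c : ℝ,
      cmap d (m + l)
        = c • (Bop d (smap d m + smap d l) + Bop d (cmap d m - cmap d l)
            - Bop d (smap d m) - Bop d (smap d l) - Bop d (cmap d m)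
            - Bop d (cmap d l))) := by
  
  have key : ∀ x : Fin d → ℝ,
      Bop d (smap d m + smap d l) x + Bop d (cmap d m - cmap d l) x
        - Bop d (smap d m) x - Bop d (smap d l) x - Bop d (cmap d m) x
        - Bop d (cmap d l) x
        = 2 * (ipZ d m l : ℝ) * Real.cos (ip d x (m + l)) := by
    intro x
    have Hsm : HasFDerivAt (smap d m) (Real.cos (ip d x m) • ipL d m) x :=
      (Real.hasDerivAt_sin (ip d x m)).comp_hasFDerivAt x (hasFDerivAt_ip d m x)
    have Hsl : HasFDerivAt (smap d l) (Real.cos (ip d x l) • ipL d l) x :=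
      (Real.hasDerivAt_sin (ip d x l)).comp_hasFDerivAt x (hasFDerivAt_ip d l x)
    have Hcm : HasFDerivAt (cmap d m) ((-Real.sin (ip d x m)) • ipL d m) x :=
      (Real.hasDerivAt_cos (ip d x m)).comp_hasFDerivAt x (hasFDerivAt_ip d m x)
    have Hcl : HasFDerivAt (cmap d l) ((-Real.sin (ip d x l)) • ipL d l) x :=
      (Real.hasDerivAt_cos (ip d x l)).comp_hasFDerivAt x (hasFDerivAt_ip d l x)
    have Hadd : HasFDerivAt (smap d m + smap d l)
        (Real.cos (ip d x m) • ipL d m + Real.cos (ip d x l) • ipL d l) x := Hsm.add Hsl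
    have Hsub : HasFDerivAt (cmap d m - cmap d l)
        ((-Real.sin (ip d x m)) • ipL d m - (-Real.sin (ip d x l)) • ipL d l) x := Hcm.sub Hcl
    have hip : ip d x (m + l) = ip d x m + ip d x l := by
      simp [ip, mul_add, Finset.sum_add_distrib]
    simp only [Bop, Hsm.fderiv, Hsl.fderiv, Hcm.fderiv, Hcl.fderiv, Hadd.fderiv, Hsub.fderiv,
      ContinuousLinearMap.add_apply, ContinuousLinearMap.sub_apply,
      ContinuousLinearMap.coe_smul', Pi.smul_apply, ipL_single, smul_eq_mul]
    rw [hip, Real.cos_add]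
    push_cast [ipZ]
    rw [Finset.mul_sum, Finset.sum_mul]
    rw [← Finset.sum_add_distrib, ← Finset.sum_sub_distrib, ← Finset.sum_sub_distrib,
      ← Finset.sum_sub_distrib, ← Finset.sum_sub_distrib]
    exact Finset.sum_congr rfl fun j _ => by ring
  refine ⟨key, fun hne => ⟨1 / (2 * (ipZ d m l : ℝ)), ?_⟩⟩
  have hz : (ipZ d m l : ℝ) ≠ 0 := Int.cast_ne_zero.mpr hne
  funext x
  have := key x
  simp only [Pi.smul_apply, Pi.sub_apply, Pi.add_apply, smul_eq_mul, cmap]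
  rw [this]
  field_simp
end

section
/- Let d ≥ 1 and let I = {m_1, …, m_N} ⊂ ℤ^d∖{0} be a finite set satisfying the connectedness condition. Then for all integers a_1, …, a_N ∈ ℤ, the functions c_{a_1 m_1 + … + a_N m_N} and s_{a_1 m_1 + … + a_N m_N} belong to H_∞(I). -/
open Real MeasureTheory

/-! For a subspace `P` containing the constants and `ε ∈ ℝ`,
`B(s_m + ε s_l) + B(c_m - ε c_l) = |m|² + |l|² ε² + 2⟨m,l⟩ ε c_{m+l}` and
`B(c_m - ε s_l) + B(s_m - ε c_l) = |m|² + |l|² ε² + 2⟨m,l⟩ ε s_{m+l}`, so taking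
`ε = ∓1 / (2⟨m,l⟩)` puts `c_{m+l}` and `s_{m+l}` into `F(P)` whenever `c_m, s_m, c_l, s_l ∈ P`
and `⟨m,l⟩ ≠ 0`. Hence the frequencies `m` with `c_m, s_m ∈ H_∞(I)` form a set containing `0` and
`I`, closed under negation and under sums of non-orthogonal pairs. Such a set contains the
`ℤ`-span of `I` when `I` is connected: a vector may be shifted by any multiple of a vector it is
not orthogonal to, and following a chain of non-orthogonal elements of `I` (shifting along each
link and back) adds any element of `I` to any vector of the span. -/

open Relation

lemma exists_add_mul_ne_zero_and_add_mul_ne_zero {α β γ δ : ℤ} (hβ : β ≠ 0) (hδ : δ ≠ 0) :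
    ∃ a : ℤ, α + a * β ≠ 0 ∧ γ + a * δ ≠ 0 := by
  -- Each side vanishes for at most one `a`, so one of `a = 0, 1, 2` works.
  by_contra! h
  have := h 0; have := h 1; have := h 2
  omega

section Lattice

variable {ι : Type*} [Fintype ι]

lemma exists_mem_dotProduct_ne_zero_of_mem_span {I : Set (ι → ℤ)} {m : ι → ℤ}
    (hm : m ∈ Submodule.span ℤ I) (hm₀ : m ≠ 0) : ∃ n ∈ I, m ⬝ᵥ n ≠ 0 := by
  by_contra! h
  have hspan : ∀ y ∈ Submodule.span ℤ I, m ⬝ᵥ y = 0 := fun y hy => by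
    induction hy using Submodule.span_induction with
    | mem x hx => exact h x hx
    | zero => exact dotProduct_zero m
    | add x y _ _ hx hy => rw [dotProduct_add, hx, hy, add_zero]
    | smul a x _ hx => rw [dotProduct_smul, hx, smul_zero]
  exact hm₀ (dotProduct_self_eq_zero.mp (hspan m hm))

structure NonorthAddClosed (S : Set (ι → ℤ)) : Prop where
  zero_mem : 0 ∈ S
  neg_mem ⦃m : ι → ℤ⦄ : m ∈ S → -m ∈ S
  add_mem ⦃m l : ι → ℤ⦄ : m ∈ S → l ∈ S → m ⬝ᵥ l ≠ 0 → m + l ∈ S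

namespace NonorthAddClosed

variable {S : Set (ι → ℤ)} (hS : NonorthAddClosed S) {m n : ι → ℤ}
include hS

lemma add_natCast_smul_mem (hm : m ∈ S) (hn : n ∈ S) (hn₀ : n ≠ 0) (hmn : m ⬝ᵥ n ≠ 0) (b : ℕ) :
    m + (b : ℤ) • n ∈ S := by
  have hnn : n ⬝ᵥ n ≠ 0 := fun h => hn₀ (dotProduct_self_eq_zero.mp h)
  have h2n : (2 : ℤ) • n ∈ S := by rw [two_smul]; exact hS.add_mem hn hn hnn
  -- `b ↦ (m + b • n) ⬝ᵥ n` vanishes at most once, and that value of `b` is skipped using `2 • n`.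
  suffices ∀ b : ℕ, m + (b : ℤ) • n ∈ S ∧ m + (b + 1 : ℤ) • n ∈ S from (this b).1
  intro b
  induction b with
  | zero => exact ⟨by simpa using hm, by simpa using hS.add_mem hm hn hmn⟩
  | succ b ih =>
    refine ⟨by exact_mod_cast ih.2, ?_⟩
    have hdot : (m + (b + 1 : ℤ) • n) ⬝ᵥ n = (m + (b : ℤ) • n) ⬝ᵥ n + n ⬝ᵥ n := by
      simp only [add_dotProduct, smul_dotProduct, smul_eq_mul]; ring
    by_cases h : (m + (b + 1 : ℤ) • n) ⬝ᵥ n = 0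
    · have h' : (m + (b : ℤ) • n) ⬝ᵥ (2 : ℤ) • n ≠ 0 := by
        rw [dotProduct_smul, smul_eq_mul]; omega
      convert hS.add_mem ih.1 h2n h' using 1
      push_cast; module
    · convert hS.add_mem ih.2 hn h using 1
      push_cast; module

lemma add_zsmul_mem (hm : m ∈ S) (hn : n ∈ S) (hn₀ : n ≠ 0) (hmn : m ⬝ᵥ n ≠ 0) (a : ℤ) :
    m + a • n ∈ S := by
  obtain ⟨b, rfl | rfl⟩ := Int.eq_nat_or_neg a
  · exact hS.add_natCast_smul_mem hm hn hn₀ hmn b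
  · have hmn' : m ⬝ᵥ -n ≠ 0 := by rwa [dotProduct_neg, neg_ne_zero]
    simpa using hS.add_natCast_smul_mem hm (hS.neg_mem hn) (neg_ne_zero.mpr hn₀) hmn' b

lemma add_mem_of_reflTransGen {q k : ι → ℤ} (hk : k ∈ S)
    (hqk : ReflTransGen (fun x y => x ∈ S ∧ x ≠ 0 ∧ x ⬝ᵥ y ≠ 0) q k) :
    ∀ m ∈ S, m ⬝ᵥ q ≠ 0 → m + k ∈ S := by
  induction hqk using ReflTransGen.head_induction_on with
  | refl => exact fun m hm hmk => hS.add_mem hm hk hmk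
  | @head q q' hqq' _ ih =>
    obtain ⟨hq, hq₀, hqq'⟩ := hqq'
    intro m hm hmq
    -- Slide `m` along `q` to a point not orthogonal to `q'`, use `q'`, and slide back.
    obtain ⟨a, ha₁, ha₂⟩ := exists_add_mul_ne_zero_and_add_mul_ne_zero
      (α := m ⬝ᵥ q') (γ := (m + k) ⬝ᵥ q) hqq' (fun h => hq₀ (dotProduct_self_eq_zero.mp h))
    have h₁ : m + a • q + k ∈ S := by
      refine ih _ (hS.add_zsmul_mem hm hq hq₀ hmq a) ?_
      simpa only [add_dotProduct, smul_dotProduct, smul_eq_mul] using ha₁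
    have h₂ : (m + a • q + k) ⬝ᵥ q ≠ 0 := by
      convert ha₂ using 1
      simp only [add_dotProduct, smul_dotProduct, smul_eq_mul]; ring
    convert hS.add_zsmul_mem h₁ hq hq₀ h₂ (-a) using 1
    module

variable {I : Finset (ι → ℤ)} (hIS : ∀ k ∈ I, k ∈ S) (hI₀ : ∀ k ∈ I, k ≠ 0)
  (hconn : ∀ l ∈ I, ∀ k ∈ I, ReflTransGen (fun x y => x ∈ I ∧ x ⬝ᵥ y ≠ 0) l k)
include hIS hI₀ hconn

lemma add_mem_of_mem_span (hm : m ∈ S) (hmI : m ∈ Submodule.span ℤ (I : Set (ι → ℤ)))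
    {k : ι → ℤ} (hk : k ∈ I) : m + k ∈ S := by
  rcases eq_or_ne m 0 with rfl | hm₀
  · simpa using hIS k hk
  obtain ⟨n, hn, hmn⟩ := exists_mem_dotProduct_ne_zero_of_mem_span hmI hm₀
  refine hS.add_mem_of_reflTransGen (hIS k hk) ?_ m hm hmn
  exact ReflTransGen.mono (fun x y ⟨hx, hxy⟩ => ⟨hIS x hx, hI₀ x hx, hxy⟩) _ _ (hconn n hn k hk)

lemma add_zsmul_mem_of_mem_span (hm : m ∈ S) (hmI : m ∈ Submodule.span ℤ (I : Set (ι → ℤ)))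
    {k : ι → ℤ} (hk : k ∈ I) (a : ℤ) : m + a • k ∈ S := by
  have hk₀ := hI₀ k hk
  by_cases hmk : m ⬝ᵥ k = 0
  · have hmkk : (m + k) ⬝ᵥ k ≠ 0 := by
      rwa [add_dotProduct, hmk, zero_add, ne_eq, dotProduct_self_eq_zero]
    convert hS.add_zsmul_mem (hS.add_mem_of_mem_span hIS hI₀ hconn hm hmI hk) (hIS k hk) hk₀
      hmkk (a - 1) using 1
    module
  · exact hS.add_zsmul_mem hm (hIS k hk) hk₀ hmk a

lemma sum_smul_mem (a : (ι → ℤ) → ℤ) : ∑ k ∈ I, a k • k ∈ S := by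
  suffices ∀ s ⊆ I, ∑ k ∈ s, a k • k ∈ S from this I subset_rfl
  intro s hs
  induction s using Finset.induction_on with
  | empty => simpa using hS.zero_mem
  | insert k s hks ih =>
    obtain ⟨hk, hs⟩ := Finset.insert_subset_iff.mp hs
    have hspan : ∑ j ∈ s, a j • j ∈ Submodule.span ℤ (I : Set (ι → ℤ)) :=
      Submodule.sum_mem _ fun j hj => Submodule.smul_mem _ _ (Submodule.subset_span (hs hj))
    rw [Finset.sum_insert hks, add_comm]
    exact hS.add_zsmul_mem_of_mem_span hIS hI₀ hconn (ih hs) hspan hk (a k)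

end NonorthAddClosed

end Lattice

section Trigonometric

variable {d : ℕ}

noncomputable def ipCLM (d : ℕ) (m : Fin d → ℤ) : (Fin d → ℝ) →L[ℝ] ℝ :=
  ∑ j, (m j : ℝ) • ContinuousLinearMap.proj j

lemma ipCLM_apply (m : Fin d → ℤ) (x : Fin d → ℝ) : ipCLM d m x = ip d x m := by
  simp [ipCLM, ip, mul_comm]

lemma ipCLM_single (m : Fin d → ℤ) (j : Fin d) : ipCLM d m (Pi.single j 1) = m j := by
  simp [ipCLM, Pi.single_apply]

lemma ip_add (x : Fin d → ℝ) (m l : Fin d → ℤ) : ip d x (m + l) = ip d x m + ip d x l := by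
  simp [ip, Finset.sum_add_distrib, mul_add]

lemma cmap_zero : cmap d 0 = 1 := by
  ext x
  simp [cmap, ip]

lemma smap_zero : smap d 0 = 0 := by
  ext x
  simp [smap, ip]

lemma cmap_neg (m : Fin d → ℤ) : cmap d (-m) = cmap d m := by
  ext x
  simp [cmap, ip]

lemma smap_neg (m : Fin d → ℤ) : smap d (-m) = -smap d m := by
  ext x
  simp [smap, ip]

lemma hasFDerivAt_cmap (m : Fin d → ℤ) (x : Fin d → ℝ) :
    HasFDerivAt (cmap d m) (-sin (ip d x m) • ipCLM d m) x := by
  rw [show cmap d m = cos ∘ ipCLM d m by ext y; simp [cmap, ipCLM_apply], ← ipCLM_apply]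
  exact (hasDerivAt_cos _).comp_hasFDerivAt x (ipCLM d m).hasFDerivAt

lemma hasFDerivAt_smap (m : Fin d → ℤ) (x : Fin d → ℝ) :
    HasFDerivAt (smap d m) (cos (ip d x m) • ipCLM d m) x := by
  rw [show smap d m = sin ∘ ipCLM d m by ext y; simp [smap, ipCLM_apply], ← ipCLM_apply]
  exact (hasDerivAt_sin _).comp_hasFDerivAt x (ipCLM d m).hasFDerivAt

lemma Bop_apply_of_hasFDerivAt {θ : (Fin d → ℝ) → ℝ} {m l : Fin d → ℤ} {P Q : ℝ}
    {x : Fin d → ℝ} (h : HasFDerivAt θ (P • ipCLM d m + Q • ipCLM d l) x) :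
    Bop d θ x = (m ⬝ᵥ m : ℤ) * P ^ 2 + 2 * (m ⬝ᵥ l : ℤ) * P * Q + (l ⬝ᵥ l : ℤ) * Q ^ 2 := by
  rw [Bop, h.fderiv]
  push_cast [dotProduct]
  simp only [Finset.sum_mul, Finset.mul_sum, ← Finset.sum_add_distrib]
  refine Finset.sum_congr rfl fun j _ => ?_
  simp [ipCLM_single]
  ring

lemma Bop_add_Bop_eq_cmap (m l : Fin d → ℤ) (ε : ℝ) (x : Fin d → ℝ) :
    Bop d (smap d m + ε • smap d l) x + Bop d (cmap d m - ε • cmap d l) x =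
      ((m ⬝ᵥ m : ℤ) + (l ⬝ᵥ l : ℤ) * ε ^ 2) + 2 * (m ⬝ᵥ l : ℤ) * ε * cmap d (m + l) x := by
  have h₁ : HasFDerivAt (smap d m + ε • smap d l)
      (cos (ip d x m) • ipCLM d m + (ε * cos (ip d x l)) • ipCLM d l) x :=
    ((hasFDerivAt_smap m x).add ((hasFDerivAt_smap l x).const_smul ε)).congr_fderiv
      (by module)
  have h₂ : HasFDerivAt (cmap d m - ε • cmap d l)
      (-sin (ip d x m) • ipCLM d m + (ε * sin (ip d x l)) • ipCLM d l) x :=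
    ((hasFDerivAt_cmap m x).sub ((hasFDerivAt_cmap l x).const_smul ε)).congr_fderiv
      (by module)
  rw [Bop_apply_of_hasFDerivAt h₁, Bop_apply_of_hasFDerivAt h₂, cmap, ip_add, cos_add]
  linear_combination (m ⬝ᵥ m : ℤ) * sin_sq_add_cos_sq (ip d x m) +
    (l ⬝ᵥ l : ℤ) * ε ^ 2 * sin_sq_add_cos_sq (ip d x l)

lemma Bop_sub_Bop_eq_smap (m l : Fin d → ℤ) (ε : ℝ) (x : Fin d → ℝ) :
    Bop d (cmap d m - ε • smap d l) x + Bop d (smap d m - ε • cmap d l) x =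
      ((m ⬝ᵥ m : ℤ) + (l ⬝ᵥ l : ℤ) * ε ^ 2) + 2 * (m ⬝ᵥ l : ℤ) * ε * smap d (m + l) x := by
  have h₁ : HasFDerivAt (cmap d m - ε • smap d l)
      (-sin (ip d x m) • ipCLM d m + (-(ε * cos (ip d x l))) • ipCLM d l) x :=
    ((hasFDerivAt_cmap m x).sub ((hasFDerivAt_smap l x).const_smul ε)).congr_fderiv
      (by module)
  have h₂ : HasFDerivAt (smap d m - ε • cmap d l)
      (cos (ip d x m) • ipCLM d m + (ε * sin (ip d x l)) • ipCLM d l) x :=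
    ((hasFDerivAt_smap m x).sub ((hasFDerivAt_cmap l x).const_smul ε)).congr_fderiv
      (by module)
  rw [Bop_apply_of_hasFDerivAt h₁, Bop_apply_of_hasFDerivAt h₂, smap, ip_add, sin_add]
  linear_combination (m ⬝ᵥ m : ℤ) * sin_sq_add_cos_sq (ip d x m) +
    (l ⬝ᵥ l : ℤ) * ε ^ 2 * sin_sq_add_cos_sq (ip d x l)

end Trigonometric

section Representable

variable {d : ℕ}

lemma Bop_const_smul (c : ℝ) (f : (Fin d → ℝ) → ℝ) : Bop d (c • f) = c ^ 2 • Bop d f := by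
  ext x
  simp [Bop, fderiv_const_smul_field, Finset.mul_sum, mul_pow]

lemma Bop_zero : Bop d 0 = 0 := by
  ext x
  simp [Bop]

lemma sub_Bop_add_Bop_mem_BRep {H : Set ((Fin d → ℝ) → ℝ)} {θ₀ θ₁ θ₂ : (Fin d → ℝ) → ℝ}
    (h₀ : θ₀ ∈ H) (h₁ : θ₁ ∈ H) (h₂ : θ₂ ∈ H) : θ₀ - (Bop d θ₁ + Bop d θ₂) ∈ BRep d H :=
  ⟨2, one_le_two, θ₀, h₀, ![θ₁, θ₂], by simp [Fin.forall_fin_two, h₁, h₂],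
    by simp [Fin.sum_univ_two]⟩

variable {P : Submodule ℝ ((Fin d → ℝ) → ℝ)} {f g : (Fin d → ℝ) → ℝ}

lemma mem_BRep_of_mem (hf : f ∈ P) : f ∈ BRep d P :=
  ⟨1, le_rfl, f, hf, fun _ => 0, fun _ => P.zero_mem, by simp [Bop_zero]⟩

lemma add_mem_BRep (hf : f ∈ BRep d P) (hg : g ∈ BRep d P) : f + g ∈ BRep d P := by
  obtain ⟨n, hn, θ₀, hθ₀, θ, hθ, rfl⟩ := hf
  obtain ⟨n', -, φ₀, hφ₀, φ, hφ, rfl⟩ := hg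
  refine ⟨n + n', by omega, θ₀ + φ₀, P.add_mem hθ₀ hφ₀, Fin.append θ φ,
    Fin.addCases (by simpa using hθ) (by simpa using hφ), ?_⟩
  rw [Fin.sum_univ_add]
  simp only [Fin.append_left, Fin.append_right]
  abel

lemma smul_mem_BRep_of_nonneg {c : ℝ} (hc : 0 ≤ c) (hf : f ∈ BRep d P) : c • f ∈ BRep d P := by
  obtain ⟨n, hn, θ₀, hθ₀, θ, hθ, rfl⟩ := hf
  refine ⟨n, hn, c • θ₀, P.smul_mem c hθ₀, fun j => √c • θ j, fun j => P.smul_mem _ (hθ j), ?_⟩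
  simp only [Bop_const_smul, Real.sq_sqrt hc, smul_sub, Finset.smul_sum]

lemma subset_Fop (P : Submodule ℝ ((Fin d → ℝ) → ℝ)) : (P : Set _) ⊆ Fop d P :=
  fun _ hf => ⟨mem_BRep_of_mem hf, mem_BRep_of_mem (P.neg_mem hf)⟩

noncomputable def fopSubmodule (P : Submodule ℝ ((Fin d → ℝ) → ℝ)) :
    Submodule ℝ ((Fin d → ℝ) → ℝ) where
  carrier := Fop d P
  add_mem' := fun ⟨hf, hf'⟩ ⟨hg, hg'⟩ =>
    ⟨add_mem_BRep hf hg, by rw [neg_add]; exact add_mem_BRep hf' hg'⟩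
  zero_mem' := subset_Fop P P.zero_mem
  smul_mem' c f := fun ⟨hf, hf'⟩ => by
    rcases le_total 0 c with hc | hc
    · refine ⟨smul_mem_BRep_of_nonneg hc hf, ?_⟩
      rw [← smul_neg]; exact smul_mem_BRep_of_nonneg hc hf'
    · refine ⟨?_, ?_⟩
      · rw [← neg_smul_neg]; exact smul_mem_BRep_of_nonneg (neg_nonneg.mpr hc) hf'
      · rw [← neg_smul]; exact smul_mem_BRep_of_nonneg (neg_nonneg.mpr hc) hf

lemma mem_Fop_of_Bop_add_Bop (hP : (1 : (Fin d → ℝ) → ℝ) ∈ P) {θ₁ θ₂ : ℝ → (Fin d → ℝ) → ℝ}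
    (hθ₁ : ∀ ε, θ₁ ε ∈ P) (hθ₂ : ∀ ε, θ₂ ε ∈ P) (K : ℝ → ℝ) {p : ℝ} (hp : p ≠ 0)
    (h : ∀ ε x, Bop d (θ₁ ε) x + Bop d (θ₂ ε) x = K ε + p * ε * g x) : g ∈ Fop d P := by
  have key : ∀ t : ℝ, t • g ∈ BRep d P := fun t => by
    convert sub_Bop_add_Bop_mem_BRep (P.smul_mem (K (-t / p)) hP) (hθ₁ (-t / p)) (hθ₂ (-t / p))
      using 1
    ext x
    simp only [Pi.smul_apply, Pi.sub_apply, Pi.add_apply, Pi.one_apply, h, smul_eq_mul]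
    field_simp
    ring
  exact ⟨by simpa using key 1, by simpa using key (-1)⟩

end Representable

section Hierarchy

variable {d : ℕ}

lemma exists_submodule_eq_HSeq (I : Finset (Fin d → ℤ)) (j : ℕ) :
    ∃ P : Submodule ℝ ((Fin d → ℝ) → ℝ), (1 : (Fin d → ℝ) → ℝ) ∈ P ∧ HSeq d I j = P := by
  induction j with
  | zero => exact ⟨_, Submodule.subset_span (Or.inl rfl), rfl⟩
  | succ j ih =>
    obtain ⟨P, hP, hj⟩ := ih
    exact ⟨fopSubmodule P, subset_Fop P hP, by rw [HSeq, hj]; rfl⟩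

lemma HSeq_mono (I : Finset (Fin d → ℤ)) : Monotone (HSeq d I) :=
  monotone_nat_of_le_succ fun j => by
    obtain ⟨P, -, hj⟩ := exists_submodule_eq_HSeq I j
    rw [HSeq, hj]
    exact subset_Fop P

lemma cmap_smap_add_mem_Fop {P : Submodule ℝ ((Fin d → ℝ) → ℝ)} (hP : (1 : (Fin d → ℝ) → ℝ) ∈ P)
    {m l : Fin d → ℤ} (hml : m ⬝ᵥ l ≠ 0) (hm : cmap d m ∈ P ∧ smap d m ∈ P)
    (hl : cmap d l ∈ P ∧ smap d l ∈ P) :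
    cmap d (m + l) ∈ Fop d P ∧ smap d (m + l) ∈ Fop d P := by
  have hp : 2 * ((m ⬝ᵥ l : ℤ) : ℝ) ≠ 0 := by exact_mod_cast mul_ne_zero two_ne_zero hml
  exact ⟨mem_Fop_of_Bop_add_Bop hP (fun ε => P.add_mem hm.2 (P.smul_mem ε hl.2))
      (fun ε => P.sub_mem hm.1 (P.smul_mem ε hl.1)) _ hp (Bop_add_Bop_eq_cmap m l),
    mem_Fop_of_Bop_add_Bop hP (fun ε => P.sub_mem hm.1 (P.smul_mem ε hl.2))
      (fun ε => P.sub_mem hm.2 (P.smul_mem ε hl.1)) _ hp (Bop_sub_Bop_eq_smap m l)⟩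

def freqs (d : ℕ) (I : Finset (Fin d → ℤ)) : Set (Fin d → ℤ) :=
  {m | ∃ j, cmap d m ∈ HSeq d I j ∧ smap d m ∈ HSeq d I j}

lemma nonorthAddClosed_freqs (I : Finset (Fin d → ℤ)) : NonorthAddClosed (freqs d I) where
  zero_mem := by
    obtain ⟨P, hP, h₀⟩ := exists_submodule_eq_HSeq I 0
    exact ⟨0, by rw [h₀, cmap_zero]; exact hP, by rw [h₀, smap_zero]; exact P.zero_mem⟩
  neg_mem m := fun ⟨j, hc, hs⟩ => by
    obtain ⟨P, -, hj⟩ := exists_submodule_eq_HSeq I j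
    rw [hj] at hs
    exact ⟨j, by rwa [cmap_neg], by rw [hj, smap_neg]; exact P.neg_mem hs⟩
  add_mem m l := fun ⟨i, hmc, hms⟩ ⟨j, hlc, hls⟩ hml => by
    obtain ⟨P, hP, hij⟩ := exists_submodule_eq_HSeq I (max i j)
    have hi := HSeq_mono I (le_max_left i j)
    have hj := HSeq_mono I (le_max_right i j)
    rw [hij] at hi hj
    refine ⟨max i j + 1, ?_⟩
    rw [HSeq, hij]
    exact cmap_smap_add_mem_Fop hP hml ⟨hi hmc, hi hms⟩ ⟨hj hlc, hj hls⟩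

lemma reflTransGen_of_connectedSet {I : Finset (Fin d → ℤ)} (hconn : ConnectedSet d I) :
    ∀ l ∈ I, ∀ k ∈ I, ReflTransGen (fun x y => x ∈ I ∧ x ⬝ᵥ y ≠ 0) l k := by
  intro l hl k hk
  obtain ⟨r, n, hnI, hl₀, hchain, hk₀⟩ := hconn l hl k hk
  have hpath : ∀ i, ReflTransGen (fun x y => x ∈ I ∧ x ⬝ᵥ y ≠ 0) (n 0) (n i) :=
    Fin.induction .refl fun i ih => ih.tail ⟨hnI _, hchain i⟩
  exact ((hpath (Fin.last r)).head ⟨hl, hl₀⟩).tail ⟨hnI _, hk₀⟩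

end Hierarchy

theorem stmt7_general (d : ℕ) (I : Finset (Fin d → ℤ)) (hI : ∀ k ∈ I, k ≠ 0)
    (hconn : ConnectedSet d I) (a : (Fin d → ℤ) → ℤ) :
    cmap d (∑ k ∈ I, a k • k) ∈ Hinf d I ∧
      smap d (∑ k ∈ I, a k • k) ∈ Hinf d I := by
  have hIS : ∀ k ∈ I, k ∈ freqs d I := fun k hk =>
    ⟨0, Submodule.subset_span (Or.inr (Set.mem_biUnion hk (by simp))),
      Submodule.subset_span (Or.inr (Set.mem_biUnion hk (by simp)))⟩
  obtain ⟨j, hc, hs⟩ :=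
    (nonorthAddClosed_freqs I).sum_smul_mem hIS hI (reflTransGen_of_connectedSet hconn) a
  exact ⟨Set.mem_iUnion_of_mem j hc, Set.mem_iUnion_of_mem j hs⟩

/-- if I satisfies the connectedness condition, then for all
integer coefficients a, the functions c and s of any ℤ-linear combination of
elements of I belong to H_∞(I). -/
theorem stmt7 (d : ℕ) (hd : 1 ≤ d) (I : Finset (Fin d → ℤ)) (hI : ∀ k ∈ I, k ≠ 0)
    (hconn : ConnectedSet d I) (a : (Fin d → ℤ) → ℤ) :
    cmap d (∑ k ∈ I, a k • k) ∈ Hinf d I ∧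
      smap d (∑ k ∈ I, a k • k) ∈ Hinf d I :=
  stmt7_general d I hI hconn a
end

section
/- (Necessity part of Proposition 2.5.) Let d ≥ 1 and let I ⊂ ℤ^d∖{0} be a finite set. Suppose that H_∞(I) is uniformly dense in the continuous periodic functions, i.e., for every continuous (2πℤ^d)-periodic f : ℝ^d → ℝ and every ε > 0 there exists g ∈ H_∞(I) with sup_{x ∈ ℝ^d} |f(x) − g(x)| < ε. Then I is a generator and I satisfies the connectedness condition. -/
/-!
Call `S ⊆ ℤ^d` stable for `I` if it contains `0` and `I`, is symmetric, and contains `k + l`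
whenever `k, l ∈ S` and `⟨k, l⟩ ≠ 0`. If `θ = ∑ c_k e^{i⟨x,k⟩}` has frequencies in `S`, then
`B(θ) = -∑ ⟨k, l⟩ c_k c_l e^{i⟨x,k+l⟩}` again has frequencies in `S`, so by induction every
function of `H_∞(I)` is a trigonometric polynomial with frequencies in `S`. The `μ`-th Fourier
coefficient of such a polynomial vanishes when `μ ∉ S`, whereas that of `cos⟨x,μ⟩` is
`(2π)^d / 2`; hence uniform density forces every stable set to be all of `ℤ^d`.

The lattice spanned by `I` is stable, which gives the generator property. If `m ∈ I` cannot be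
reached from `l ∈ I` by a chain as in the connectedness condition, the lattices spanned by the
reachable and by the unreachable vectors of `I` are orthogonal, so their union is stable; but it
does not contain `l + m`.
-/

open Real MeasureTheory

open Complex (I)

section Orthogonality

variable {ι R : Type*} [Fintype ι]

lemma dotProduct_eq_zero_of_mem_span [CommRing R] {A B : Set (ι → R)}
    (h : ∀ a ∈ A, ∀ b ∈ B, a ⬝ᵥ b = 0) {a b : ι → R}
    (ha : a ∈ Submodule.span R A) (hb : b ∈ Submodule.span R B) : a ⬝ᵥ b = 0 := by
  have hA : ∀ a ∈ A, a ⬝ᵥ b = 0 := fun a ha' =>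
    Submodule.span_le (p := LinearMap.ker (dotProductBilin R R a)).2 (h a ha') hb
  exact Submodule.span_le (p := LinearMap.ker ((dotProductBilin R R).flip b)).2 hA ha

lemma add_notMem_union_of_dotProduct_eq_zero [CommRing R] [LinearOrder R] [IsStrictOrderedRing R]
    {P Q : Submodule R (ι → R)} (hPQ : ∀ a ∈ P, ∀ b ∈ Q, a ⬝ᵥ b = 0) {l m : ι → R}
    (hl : l ∈ P) (hm : m ∈ Q) (hl0 : l ≠ 0) (hm0 : m ≠ 0) :
    l + m ∉ (P : Set (ι → R)) ∪ Q := by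
  rintro (hP | hQ)
  · have hmP : m ∈ P := by simpa using P.sub_mem hP hl
    exact hm0 (dotProduct_self_eq_zero.1 (hPQ m hmP m hm))
  · have hlQ : l ∈ Q := by simpa using Q.sub_mem hQ hm
    exact hl0 (dotProduct_self_eq_zero.1 (hPQ l hl l hlQ))

end Orthogonality

structure IsStableFrequencySet (d : ℕ) (I : Finset (Fin d → ℤ)) (S : Set (Fin d → ℤ)) : Prop where
  zero_mem : 0 ∈ S
  subset : ↑I ⊆ S
  neg_mem : ∀ k ∈ S, -k ∈ S
  add_mem : ∀ k ∈ S, ∀ l ∈ S, ipZ d k l ≠ 0 → k + l ∈ S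

lemma isStableFrequencySet_submodule {d : ℕ} {I : Finset (Fin d → ℤ)}
    {P : Submodule ℤ (Fin d → ℤ)} (hI : ↑I ⊆ (P : Set (Fin d → ℤ))) :
    IsStableFrequencySet d I P :=
  ⟨P.zero_mem, hI, fun _ hk => P.neg_mem hk, fun _ hk _ hl _ => P.add_mem hk hl⟩

lemma isStableFrequencySet_union {d : ℕ} {I : Finset (Fin d → ℤ)}
    {P Q : Submodule ℤ (Fin d → ℤ)} (hPQ : ∀ a ∈ P, ∀ b ∈ Q, a ⬝ᵥ b = 0)
    (hI : ↑I ⊆ (P : Set (Fin d → ℤ)) ∪ Q) :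
    IsStableFrequencySet d I ((P : Set (Fin d → ℤ)) ∪ Q) where
  zero_mem := Or.inl P.zero_mem
  subset := hI
  neg_mem := by
    rintro k (hk | hk)
    exacts [Or.inl (P.neg_mem hk), Or.inr (Q.neg_mem hk)]
  add_mem := by
    rintro k (hk | hk) l (hl | hl) hkl
    · exact Or.inl (P.add_mem hk hl)
    · exact absurd (hPQ k hk l hl) hkl
    · exact absurd ((dotProduct_comm k l).trans (hPQ l hl k hk)) hkl
    · exact Or.inr (Q.add_mem hk hl)

section Characters

variable {d : ℕ}

noncomputable def torusChar (d : ℕ) (k : Fin d → ℤ) (x : Fin d → ℝ) : ℂ :=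
  Complex.exp (ip d x k * I)

lemma torusChar_add (k l : Fin d → ℤ) (x : Fin d → ℝ) :
    torusChar d (k + l) x = torusChar d k x * torusChar d l x := by
  simp only [torusChar, ip, ← Complex.exp_add, Pi.add_apply, Int.cast_add, mul_add,
    Finset.sum_add_distrib]
  push_cast
  ring_nf

lemma torusChar_zero : torusChar d 0 = 1 := by
  ext x
  simp [torusChar, ip]

lemma torusChar_eq_prod (k : Fin d → ℤ) (x : Fin d → ℝ) :
    torusChar d k x = ∏ j, Complex.exp (x j * k j * I) := by
  rw [torusChar, ← Complex.exp_sum, ip]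
  push_cast
  rw [Finset.sum_mul]

lemma norm_torusChar (k : Fin d → ℤ) (x : Fin d → ℝ) : ‖torusChar d k x‖ = 1 :=
  Complex.norm_exp_ofReal_mul_I _

lemma continuous_torusChar (k : Fin d → ℤ) : Continuous (torusChar d k) := by
  unfold torusChar ip
  fun_prop

lemma ofReal_cmap (k : Fin d → ℤ) (x : Fin d → ℝ) :
    (cmap d k x : ℂ) = 2⁻¹ * torusChar d k x + 2⁻¹ * torusChar d (-k) x := by
  simp only [cmap, torusChar, Complex.ofReal_cos, Complex.cos, ip, Pi.neg_apply, Int.cast_neg]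
  push_cast
  simp only [mul_neg, Finset.sum_neg_distrib, neg_mul]
  ring

lemma ofReal_smap (k : Fin d → ℤ) (x : Fin d → ℝ) :
    (smap d k x : ℂ) = -(I / 2) * torusChar d k x + I / 2 * torusChar d (-k) x := by
  simp only [smap, torusChar, Complex.ofReal_sin, Complex.sin, ip, Pi.neg_apply, Int.cast_neg]
  push_cast
  simp only [mul_neg, Finset.sum_neg_distrib, neg_mul]
  field_simp
  ring_nf

end Characters

section TrigPolynomials

variable {d : ℕ}

noncomputable def trigSpan (d : ℕ) (S : Set (Fin d → ℤ)) : Submodule ℂ ((Fin d → ℝ) → ℂ) :=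
  Submodule.span ℂ (torusChar d '' S)

noncomputable def realTrig (d : ℕ) (S : Set (Fin d → ℤ)) : Submodule ℝ ((Fin d → ℝ) → ℝ) :=
  ((trigSpan d S).restrictScalars ℝ).comap (LinearMap.compLeft Complex.ofRealCLM.toLinearMap _)

lemma mem_realTrig {S : Set (Fin d → ℤ)} {g : (Fin d → ℝ) → ℝ} :
    g ∈ realTrig d S ↔ (fun x => (g x : ℂ)) ∈ trigSpan d S :=
  Iff.rfl

lemma torusChar_mem_trigSpan {S : Set (Fin d → ℤ)} {k : Fin d → ℤ} (hk : k ∈ S) :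
    torusChar d k ∈ trigSpan d S :=
  Submodule.subset_span ⟨k, hk, rfl⟩

lemma exists_eq_sum_of_mem_trigSpan {S : Set (Fin d → ℤ)} {Φ : (Fin d → ℝ) → ℂ}
    (hΦ : Φ ∈ trigSpan d S) :
    ∃ T : Finset (Fin d → ℤ), ↑T ⊆ S ∧ ∃ c : (Fin d → ℤ) → ℂ,
      ∀ x, Φ x = ∑ k ∈ T, c k * torusChar d k x := by
  obtain ⟨l, hlS, rfl⟩ := (Finsupp.mem_span_image_iff_linearCombination ℂ).1 hΦ
  refine ⟨l.support, (Finsupp.mem_supported _ _).1 hlS, l, fun x => ?_⟩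
  simp [Finsupp.linearCombination_apply, Finsupp.sum]

lemma continuous_of_mem_trigSpan {S : Set (Fin d → ℤ)} {Φ : (Fin d → ℝ) → ℂ}
    (hΦ : Φ ∈ trigSpan d S) : Continuous Φ := by
  induction hΦ using Submodule.span_induction with
  | mem _ h => obtain ⟨k, -, rfl⟩ := h; exact continuous_torusChar k
  | zero => exact continuous_const
  | add _ _ _ _ hf hg => exact hf.add hg
  | smul c _ _ hf => exact hf.const_smul c

lemma one_mem_realTrig {S : Set (Fin d → ℤ)} (h0 : 0 ∈ S) : (fun _ => (1 : ℝ)) ∈ realTrig d S := by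
  have h := torusChar_mem_trigSpan (d := d) h0
  rwa [torusChar_zero] at h

lemma cmap_mem_realTrig {S : Set (Fin d → ℤ)} {k : Fin d → ℤ} (hk : k ∈ S) (hk' : -k ∈ S) :
    cmap d k ∈ realTrig d S := by
  have h : (fun x => (cmap d k x : ℂ)) =
      (2⁻¹ : ℂ) • torusChar d k + (2⁻¹ : ℂ) • torusChar d (-k) := by
    ext x; simp [ofReal_cmap]
  rw [mem_realTrig, h]
  exact add_mem (Submodule.smul_mem _ _ (torusChar_mem_trigSpan hk))
    (Submodule.smul_mem _ _ (torusChar_mem_trigSpan hk'))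

lemma smap_mem_realTrig {S : Set (Fin d → ℤ)} {k : Fin d → ℤ} (hk : k ∈ S) (hk' : -k ∈ S) :
    smap d k ∈ realTrig d S := by
  have h : (fun x => (smap d k x : ℂ)) =
      (-(I / 2)) • torusChar d k + (I / 2) • torusChar d (-k) := by
    ext x; simp [ofReal_smap]
  rw [mem_realTrig, h]
  exact add_mem (Submodule.smul_mem _ _ (torusChar_mem_trigSpan hk))
    (Submodule.smul_mem _ _ (torusChar_mem_trigSpan hk'))

end TrigPolynomials

section Derivatives

lemma ofReal_fderiv_apply {E : Type*} [NormedAddCommGroup E] [NormedSpace ℝ E] {θ : E → ℝ}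
    {Φ' : E →L[ℝ] ℂ} {x : E} (h : HasFDerivAt (fun y => (θ y : ℂ)) Φ' x) (v : E) :
    (fderiv ℝ θ x v : ℂ) = Φ' v := by
  have hθ : HasFDerivAt θ (Complex.reCLM ∘L Φ') x := Complex.reCLM.hasFDerivAt.comp x h
  have hΦ' := (Complex.ofRealCLM.hasFDerivAt.comp x hθ).unique h
  rw [hθ.fderiv, ← hΦ']
  rfl

variable {d : ℕ}

noncomputable def torusCharExponent (d : ℕ) (k : Fin d → ℤ) : (Fin d → ℝ) →L[ℝ] ℂ :=
  ∑ j, ((k j : ℂ) * I) • (Complex.ofRealCLM ∘L ContinuousLinearMap.proj j)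

lemma torusCharExponent_apply (k : Fin d → ℤ) (v : Fin d → ℝ) :
    torusCharExponent d k v = ip d v k * I := by
  simp only [torusCharExponent, ip, FunLike.coe_sum, Finset.sum_apply,
    FunLike.coe_smul, Pi.smul_apply, ContinuousLinearMap.comp_apply,
    ContinuousLinearMap.proj_apply, Complex.ofRealCLM_apply, smul_eq_mul]
  push_cast
  rw [Finset.sum_mul]
  exact Finset.sum_congr rfl fun j _ => by ring

lemma hasFDerivAt_torusChar (k : Fin d → ℤ) (x : Fin d → ℝ) :
    HasFDerivAt (torusChar d k) (torusChar d k x • torusCharExponent d k) x := by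
  have h : torusChar d k = fun y => Complex.exp (torusCharExponent d k y) := by
    ext y; rw [torusChar, torusCharExponent_apply]
  rw [h]
  exact (Complex.hasDerivAt_exp _).comp_hasFDerivAt x (torusCharExponent d k).hasFDerivAt

lemma ofReal_fderiv_single_of_eq_sum {θ : (Fin d → ℝ) → ℝ} {T : Finset (Fin d → ℤ)}
    {c : (Fin d → ℤ) → ℂ} (hθ : ∀ x, (θ x : ℂ) = ∑ k ∈ T, c k * torusChar d k x)
    (x : Fin d → ℝ) (j : Fin d) :
    (fderiv ℝ θ x (Pi.single j 1) : ℂ) = ∑ k ∈ T, c k * torusChar d k x * (k j * I) := by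
  have hΦ : HasFDerivAt (fun y => (θ y : ℂ))
      (∑ k ∈ T, c k • torusChar d k x • torusCharExponent d k) x := by
    simp_rw [hθ]
    exact HasFDerivAt.fun_sum fun k _ => (hasFDerivAt_torusChar k x).const_smul (c k)
  rw [ofReal_fderiv_apply hΦ]
  simp [torusCharExponent_apply, ip, Pi.single_apply, mul_assoc]

lemma ofReal_Bop_of_eq_sum {θ : (Fin d → ℝ) → ℝ} {T : Finset (Fin d → ℤ)}
    {c : (Fin d → ℤ) → ℂ} (hθ : ∀ x, (θ x : ℂ) = ∑ k ∈ T, c k * torusChar d k x)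
    (x : Fin d → ℝ) :
    (Bop d θ x : ℂ) =
      ∑ p ∈ T ×ˢ T, -(ipZ d p.1 p.2 : ℂ) * c p.1 * c p.2 * torusChar d (p.1 + p.2) x := by
  push_cast [Bop, ofReal_fderiv_single_of_eq_sum hθ, sq, Finset.sum_mul_sum, Finset.sum_product]
  rw [Finset.sum_comm]
  refine Finset.sum_congr rfl fun k _ => ?_
  rw [Finset.sum_comm]
  refine Finset.sum_congr rfl fun l _ => ?_
  simp only [ipZ, torusChar_add, Int.cast_sum, Int.cast_mul, Finset.sum_mul,
    ← Finset.sum_neg_distrib]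
  refine Finset.sum_congr rfl fun j _ => ?_
  linear_combination (c k * c l * torusChar d k x * torusChar d l x * k j * l j) * Complex.I_sq

end Derivatives

namespace IsStableFrequencySet

variable {d : ℕ} {I : Finset (Fin d → ℤ)} {S : Set (Fin d → ℤ)}

lemma Bop_mem_realTrig (hS : IsStableFrequencySet d I S) {θ : (Fin d → ℝ) → ℝ}
    (hθ : θ ∈ realTrig d S) : Bop d θ ∈ realTrig d S := by
  obtain ⟨T, hTS, c, hθT⟩ := exists_eq_sum_of_mem_trigSpan (mem_realTrig.1 hθ)
  have hB : (fun x => (Bop d θ x : ℂ)) =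
      ∑ p ∈ T ×ˢ T, (-(ipZ d p.1 p.2 : ℂ) * c p.1 * c p.2) • torusChar d (p.1 + p.2) := by
    ext x; simp [ofReal_Bop_of_eq_sum hθT x]
  rw [mem_realTrig, hB]
  refine Submodule.sum_mem _ fun p hp => ?_
  obtain ⟨hp₁, hp₂⟩ := Finset.mem_product.1 hp
  by_cases horth : ipZ d p.1 p.2 = 0
  · simp [horth]
  · exact Submodule.smul_mem _ _
      (torusChar_mem_trigSpan (hS.add_mem _ (hTS hp₁) _ (hTS hp₂) horth))

lemma H0_subset_realTrig (hS : IsStableFrequencySet d I S) : H0 d I ⊆ realTrig d S := by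
  refine Submodule.span_le.2 (Set.union_subset ?_ (Set.iUnion₂_subset fun k hk => ?_))
  · simpa using one_mem_realTrig hS.zero_mem
  · have hkS := hS.subset hk
    exact Set.insert_subset (cmap_mem_realTrig hkS (hS.neg_mem k hkS))
      (Set.singleton_subset_iff.2 (smap_mem_realTrig hkS (hS.neg_mem k hkS)))

lemma Hinf_subset_realTrig (hS : IsStableFrequencySet d I S) : Hinf d I ⊆ realTrig d S := by
  have hseq : ∀ j, HSeq d I j ⊆ realTrig d S := by
    intro j
    induction j with
    | zero => exact hS.H0_subset_realTrig
    | succ j ih =>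
      rintro f ⟨⟨n, -, θ₀, hθ₀, θ, hθ, rfl⟩, -⟩
      exact sub_mem (ih hθ₀) (sum_mem fun i _ => hS.Bop_mem_realTrig (ih (hθ i)))
  exact Set.iUnion_subset hseq

end IsStableFrequencySet

section Integrals

variable {d : ℕ}

noncomputable def box (d : ℕ) : Set (Fin d → ℝ) := Set.univ.pi fun _ => Set.Ioc 0 (2 * π)

lemma volume_box : volume (box d) = ENNReal.ofReal (2 * π) ^ d := by
  simp [box, volume_pi_pi, Real.volume_Ioc]

lemma volume_real_box : volume.real (box d) = (2 * π) ^ d := by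
  simp [measureReal_def, volume_box, ENNReal.toReal_pow, pi_pos.le]

lemma Continuous.integrableOn_box {E : Type*} [NormedAddCommGroup E] {f : (Fin d → ℝ) → E}
    (hf : Continuous f) : IntegrableOn f (box d) :=
  (hf.continuousOn.integrableOn_compact (isCompact_univ_pi fun _ => isCompact_Icc)).mono_set
    (Set.pi_mono fun _ _ => Set.Ioc_subset_Icc_self)

lemma integral_exp_int_mul_I (n : ℤ) :
    ∫ t in Set.Ioc 0 (2 * π), Complex.exp (t * n * I) = if n = 0 then ((2 * π : ℝ) : ℂ) else 0 := by
  rw [← intervalIntegral.integral_of_le (by positivity)]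
  split_ifs with hn
  · simp [hn]
  · have hc : (n : ℂ) * I ≠ 0 := by simp [hn]
    simp_rw [mul_assoc, mul_comm (_ : ℂ) ((n : ℂ) * I)]
    rw [integral_exp_mul_complex hc]
    have h1 : Complex.exp (n * I * (2 * π)) = 1 := by
      rw [← Complex.exp_int_mul_two_pi_mul_I n]; ring_nf
    simp [h1]

lemma integral_torusChar_box (k : Fin d → ℤ) :
    ∫ x in box d, torusChar d k x = if k = 0 then (((2 * π) ^ d : ℝ) : ℂ) else 0 := by
  simp_rw [box, torusChar_eq_prod, volume_pi, Measure.restrict_pi_pi]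
  rw [integral_fintype_prod_eq_prod (E := fun _ => ℝ) (fun j t => Complex.exp (t * k j * I))]
  simp_rw [integral_exp_int_mul_I, Fintype.prod_ite_zero, funext_iff, Pi.zero_apply]
  simp

lemma integral_mul_torusChar_neg_eq_zero {S : Set (Fin d → ℤ)} {μ : Fin d → ℤ} (hμ : μ ∉ S)
    {Φ : (Fin d → ℝ) → ℂ} (hΦ : Φ ∈ trigSpan d S) :
    ∫ x in box d, Φ x * torusChar d (-μ) x = 0 := by
  have hint : ∀ Ψ ∈ trigSpan d S, IntegrableOn (fun x => Ψ x * torusChar d (-μ) x) (box d) :=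
    fun Ψ hΨ => ((continuous_of_mem_trigSpan hΨ).mul (continuous_torusChar _)).integrableOn_box
  induction hΦ using Submodule.span_induction with
  | mem _ h =>
    obtain ⟨k, hk, rfl⟩ := h
    have hkμ : k + -μ ≠ 0 := fun h => hμ (by rwa [← neg_neg μ, ← add_eq_zero_iff_eq_neg.1 h])
    simp_rw [← torusChar_add, integral_torusChar_box, if_neg hkμ]
  | zero => simp
  | add Ψ₁ Ψ₂ h₁ h₂ ih₁ ih₂ =>
    simp_rw [Pi.add_apply, add_mul]
    rw [integral_add (hint _ h₁) (hint _ h₂), ih₁, ih₂, add_zero]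
  | smul c Ψ _ ih =>
    simp_rw [Pi.smul_apply, smul_eq_mul, mul_assoc]
    rw [integral_const_mul, ih, mul_zero]

lemma integral_ofReal_cmap_mul_torusChar_neg {μ : Fin d → ℤ} (hμ : μ ≠ 0) :
    ∫ x in box d, (cmap d μ x : ℂ) * torusChar d (-μ) x = (((2 * π) ^ d : ℝ) : ℂ) / 2 := by
  have h2μ : -μ + -μ ≠ 0 := by
    rw [← neg_add, neg_ne_zero, ← two_smul ℤ]
    exact smul_ne_zero two_ne_zero hμ
  have hint : ∀ (a : ℂ) k, IntegrableOn (fun x => a * torusChar d k x) (box d) :=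
    fun a k => (continuous_const.mul (continuous_torusChar k)).integrableOn_box
  simp_rw [ofReal_cmap, add_mul, mul_assoc, ← torusChar_add, add_neg_cancel]
  rw [integral_add (hint _ _) (hint _ _), integral_const_mul, integral_const_mul,
    integral_torusChar_box, integral_torusChar_box, if_pos rfl, if_neg h2μ]
  ring

end Integrals

section Density

variable {d : ℕ}

lemma continuous_cmap (μ : Fin d → ℤ) : Continuous (cmap d μ) := by
  unfold cmap ip
  fun_prop

lemma periodic2pi_cmap (μ : Fin d → ℤ) : Periodic2pi d (cmap d μ) := by
  intro x k
  have h : ip d (x + fun j => 2 * π * (k j : ℝ)) μ = ip d x μ + (ipZ d k μ : ℤ) * (2 * π) := by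
    simp only [ip, ipZ, Pi.add_apply, add_mul, Finset.sum_add_distrib, Int.cast_sum, Int.cast_mul,
      Finset.sum_mul]
    congr 1
    exact Finset.sum_congr rfl fun j _ => by ring
  rw [cmap, cmap, h, Real.cos_add_int_mul_two_pi]

lemma exists_le_abs_cmap_sub {S : Set (Fin d → ℤ)} (h0 : 0 ∈ S) {μ : Fin d → ℤ} (hμ : μ ∉ S)
    {g : (Fin d → ℝ) → ℝ} (hg : g ∈ realTrig d S) : ∃ x, 1 / 4 ≤ |cmap d μ x - g x| := by
  by_contra! hclose
  have hμ0 : μ ≠ 0 := by rintro rfl; exact hμ h0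
  have hint : ∀ Φ : (Fin d → ℝ) → ℂ, Continuous Φ →
      IntegrableOn (fun x => Φ x * torusChar d (-μ) x) (box d) :=
    fun Φ hΦ => (hΦ.mul (continuous_torusChar _)).integrableOn_box
  have hcoeff : ∫ x in box d, ((cmap d μ x - g x : ℝ) : ℂ) * torusChar d (-μ) x =
      (((2 * π) ^ d : ℝ) : ℂ) / 2 := by
    simp_rw [Complex.ofReal_sub, sub_mul]
    rw [integral_sub (hint (fun x => (cmap d μ x : ℂ))
        (Complex.continuous_ofReal.comp (continuous_cmap μ)))
        (hint (fun x => (g x : ℂ)) (continuous_of_mem_trigSpan (mem_realTrig.1 hg))),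
      integral_ofReal_cmap_mul_torusChar_neg hμ0,
      integral_mul_torusChar_neg_eq_zero hμ (mem_realTrig.1 hg), sub_zero]
  have hbound := norm_setIntegral_le_of_norm_le_const (C := 1 / 4)
    (volume_box (d := d) ▸ ENNReal.pow_lt_top ENNReal.ofReal_lt_top)
    (f := fun x => ((cmap d μ x - g x : ℝ) : ℂ) * torusChar d (-μ) x)
    fun x _ => by
      rw [norm_mul, norm_torusChar, mul_one, Complex.norm_real, Real.norm_eq_abs]
      exact (hclose x).le
  rw [hcoeff, volume_real_box, norm_div, Complex.norm_real, Real.norm_of_nonneg (by positivity)]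
    at hbound
  have hpos : 0 < (2 * π) ^ d := by positivity
  norm_num at hbound
  linarith

lemma IsStableFrequencySet.eq_univ {I : Finset (Fin d → ℤ)} {S : Set (Fin d → ℤ)}
    (hS : IsStableFrequencySet d I S)
    (hdense : ∀ f : (Fin d → ℝ) → ℝ, Continuous f → Periodic2pi d f →
      ∀ ε : ℝ, 0 < ε → ∃ g ∈ Hinf d I, ∀ x : Fin d → ℝ, |f x - g x| < ε) :
    S = Set.univ := by
  refine Set.eq_univ_of_forall fun μ => ?_
  by_contra hμ
  obtain ⟨g, hg, hclose⟩ :=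
    hdense (cmap d μ) (continuous_cmap μ) (periodic2pi_cmap μ) (1 / 4) (by norm_num)
  obtain ⟨x, hx⟩ := exists_le_abs_cmap_sub hS.zero_mem hμ (hS.Hinf_subset_realTrig hg)
  exact (hclose x).not_ge hx

end Density

section Chains

variable {d : ℕ} {I : Finset (Fin d → ℤ)}

def Linked (d : ℕ) (I : Finset (Fin d → ℤ)) (l b : Fin d → ℤ) : Prop :=
  ∃ k : ℕ, ∃ n : Fin (k + 1) → (Fin d → ℤ),
    (∀ j, n j ∈ I) ∧ ipZ d l (n 0) ≠ 0 ∧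
    (∀ j : Fin k, ipZ d (n j.castSucc) (n j.succ) ≠ 0) ∧ n (Fin.last k) = b

lemma linked_self {l : Fin d → ℤ} (hl : l ∈ I) (hl0 : l ≠ 0) : Linked d I l l :=
  ⟨0, fun _ => l, fun _ => hl, mt dotProduct_self_eq_zero.1 hl0, Fin.elim0, rfl⟩

lemma Linked.snoc {l a b : Fin d → ℤ} (h : Linked d I l a) (hb : b ∈ I) (hab : ipZ d a b ≠ 0) :
    Linked d I l b := by
  obtain ⟨k, n, hn, h0, hstep, rfl⟩ := h
  refine ⟨k + 1, Fin.snoc n b, Fin.lastCases (by simpa) (by simpa), by simpa using h0,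
    Fin.lastCases (by simpa) fun j => by
      rw [Fin.succ_castSucc, Fin.snoc_castSucc, Fin.snoc_castSucc]; exact hstep j, by simp⟩

end Chains

lemma isGenerator_of_forall_eq_univ {d : ℕ} {I : Finset (Fin d → ℤ)}
    (h : ∀ S, IsStableFrequencySet d I S → S = Set.univ) : IsGenerator d I := by
  intro n
  have hn : n ∈ Submodule.span ℤ (I : Set (Fin d → ℤ)) := by
    rw [← SetLike.mem_coe, h _ (isStableFrequencySet_submodule Submodule.subset_span)]
    trivial
  obtain ⟨a, -, ha⟩ := Submodule.mem_span_finset.1 hn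
  exact ⟨a, ha.symm⟩

lemma connectedSet_of_forall_eq_univ {d : ℕ} {I : Finset (Fin d → ℤ)} (hI : ∀ k ∈ I, k ≠ 0)
    (h : ∀ S, IsStableFrequencySet d I S → S = Set.univ) : ConnectedSet d I := by
  intro l hl m hm
  by_contra! hlm
  set A := {b | b ∈ I ∧ Linked d I l b}
  set B := {b | b ∈ I ∧ ¬Linked d I l b}
  have horth : ∀ a ∈ Submodule.span ℤ A, ∀ b ∈ Submodule.span ℤ B, a ⬝ᵥ b = 0 :=
    fun a ha b hb => dotProduct_eq_zero_of_mem_span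
      (fun a ha b hb => by_contra fun hab => hb.2 (ha.2.snoc hb.1 hab)) ha hb
  have hIAB : ↑I ⊆ (Submodule.span ℤ A : Set (Fin d → ℤ)) ∪ Submodule.span ℤ B := fun b hb =>
    (em (Linked d I l b)).imp (fun hlb => Submodule.subset_span ⟨hb, hlb⟩)
      (fun hlb => Submodule.subset_span ⟨hb, hlb⟩)
  have hlA : l ∈ Submodule.span ℤ A := Submodule.subset_span ⟨hl, linked_self hl (hI l hl)⟩
  have hmB : m ∈ Submodule.span ℤ B :=
    Submodule.subset_span ⟨hm, fun ⟨k, n, hn, h0, hstep, hlast⟩ =>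
      hI m hm (dotProduct_self_eq_zero.1 (hlast ▸ hlm k n hn h0 hstep))⟩
  apply add_notMem_union_of_dotProduct_eq_zero horth hlA hmB (hI l hl) (hI m hm)
  rw [h _ (isStableFrequencySet_union horth hIAB)]
  trivial

theorem stmt10_general (d : ℕ) (I : Finset (Fin d → ℤ)) (hI : ∀ k ∈ I, k ≠ 0)
    (hdense : ∀ f : (Fin d → ℝ) → ℝ, Continuous f → Periodic2pi d f →
      ∀ ε : ℝ, 0 < ε → ∃ g ∈ Hinf d I, ∀ x : Fin d → ℝ, |f x - g x| < ε) :
    IsGenerator d I ∧ ConnectedSet d I := by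
  have h : ∀ S, IsStableFrequencySet d I S → S = Set.univ := fun S hS => hS.eq_univ hdense
  exact ⟨isGenerator_of_forall_eq_univ h, connectedSet_of_forall_eq_univ hI h⟩

/-- necessity in Proposition 2.5: if H_∞(I) is uniformly dense
in the continuous (2πℤ^d)-periodic functions, then I is a generator and
satisfies the connectedness condition. -/
theorem stmt10 (d : ℕ) (hd : 1 ≤ d) (I : Finset (Fin d → ℤ)) (hI : ∀ k ∈ I, k ≠ 0)
    (hdense : ∀ f : (Fin d → ℝ) → ℝ, Continuous f → Periodic2pi d f →
      ∀ ε : ℝ, 0 < ε → ∃ g ∈ Hinf d I, ∀ x : Fin d → ℝ, |f x - g x| < ε) :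
    IsGenerator d I ∧ ConnectedSet d I :=
  stmt10_general d I hI hdense
end
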